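/- arXiv:math/0210031 — 4 statements merged into one kernel-verified Lean document; each statement's English description precedes it below -/
import Mathlib

section
/- If a transition kernel K is mixing with constant ε ∈ (0,1], then its Birkhoff contraction coefficient satisfies τ(K) ≤ (1−ε²)/(1+ε²), where τ(K) = sup { h(Kμ, Kμ') / h(μ,μ') : 0 < h(μ,μ') < ∞ }. -/
open MeasureTheory ENNReal ProbabilityTheory
open scoped NNReal

def Comparable {E : Type*} [MeasurableSpace E] (μ ν : Measure E) : Prop :=
  ∃ a b : ℝ≥0, 0 < a ∧ 0 < b ∧ a • μ ≤ ν ∧ ν ≤ b • μ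

noncomputable def hilbertDist {E : Type*} [MeasurableSpace E] (μ ν : Measure E) : ℝ :=
  Real.log (((⨆ A : {s : Set E // MeasurableSet s}, μ A.1 / ν A.1) *
    (⨆ A : {s : Set E // MeasurableSet s}, ν A.1 / μ A.1)).toReal)

/-- Birkhoff contraction coefficient of a map `T` on nonnegative finite measures:
`τ(T) = sup { h(Tμ, Tμ') / h(μ, μ') : 0 < h(μ, μ') < ∞ }`. -/
noncomputable def birkhoffCoeff {E : Type*} [MeasurableSpace E]
    (T : Measure E → Measure E) : ℝ :=
  sSup {r : ℝ | ∃ μ ν : Measure E, IsFiniteMeasure μ ∧ IsFiniteMeasure ν ∧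
    Comparable μ ν ∧ 0 < hilbertDist μ ν ∧ r = hilbertDist (T μ) (T ν) / hilbertDist μ ν}

def IsMixing {E : Type*} [MeasurableSpace E] (K : Kernel E E) (ε : ℝ) : Prop :=
  ∃ lam : Measure E, IsFiniteMeasure lam ∧ lam ≠ 0 ∧
    ∀ x : E, ∀ A : Set E, MeasurableSet A →
      ENNReal.ofReal ε * lam A ≤ K x A ∧ K x A ≤ ENNReal.ofReal ε⁻¹ * lam A

lemma log_mobius_le (δ : ℝ) (hδ : 0 < δ) (hδ1 : δ ≤ 1) :
    ∀ x : ℝ, 1 ≤ x →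
      Real.log (x + δ) - Real.log (1 + δ * x) ≤ (1 - δ) / (1 + δ) * Real.log x := by
  set c := (1 - δ) / (1 + δ) with hc
  have h1δ : (0:ℝ) < 1 + δ := by linarith
  set f : ℝ → ℝ := fun x => c * Real.log x - Real.log (x + δ) + Real.log (1 + δ * x) with hf
  have hder : ∀ x ∈ Set.Ici (1:ℝ),
      HasDerivAt f (c * x⁻¹ - (x + δ)⁻¹ + δ * (1 + δ * x)⁻¹) x := by
    intro x hx
    have hx0 : (0:ℝ) < x := lt_of_lt_of_le one_pos hx
    have h1 : HasDerivAt (fun x : ℝ => c * Real.log x) (c * x⁻¹) x :=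
      (Real.hasDerivAt_log hx0.ne').const_mul c
    have h2 : HasDerivAt (fun x : ℝ => Real.log (x + δ)) ((x + δ)⁻¹) x := by
      have := (Real.hasDerivAt_log (by linarith : x + δ ≠ 0)).comp x
        ((hasDerivAt_id x).add_const δ)
      simpa [Function.comp_def] using this
    have h3 : HasDerivAt (fun x : ℝ => Real.log (1 + δ * x)) (δ * (1 + δ * x)⁻¹) x := by
      have hδx : 1 + δ * x ≠ 0 := by nlinarith
      have := (Real.hasDerivAt_log hδx).comp x
        (((hasDerivAt_id x).const_mul δ).const_add 1)
      simpa [mul_comm, Function.comp_def] using this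
    exact (h1.sub h2).add h3
  have hmono : MonotoneOn f (Set.Ici (1:ℝ)) := by
    apply monotoneOn_of_deriv_nonneg (convex_Ici 1)
    · exact continuousOn_of_forall_continuousAt fun x hx => (hder x hx).continuousAt
    · intro x hx
      rw [interior_Ici] at hx
      exact (hder x (Set.mem_Ici.mpr (le_of_lt (Set.mem_Ioi.mp hx)))).differentiableAt.differentiableWithinAt
    · intro x hx
      rw [interior_Ici] at hx
      rw [(hder x (Set.mem_Ici.mpr (Set.mem_Ioi.mp hx).le)).deriv]
      have hx0 : (0:ℝ) < x := lt_trans one_pos (Set.mem_Ioi.mp hx)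
      have hxδ : (0:ℝ) < x + δ := by linarith
      have hδx : (0:ℝ) < 1 + δ * x := by nlinarith
      have key : c * x⁻¹ - (x + δ)⁻¹ + δ * (1 + δ * x)⁻¹ =
          ((1 - δ) * (x + δ) * (1 + δ * x) - (1 + δ) * x * (1 + δ * x)
            + (1 + δ) * δ * x * (x + δ)) / ((1 + δ) * x * (x + δ) * (1 + δ * x)) := by
        rw [hc]
        field_simp [hc]
      rw [key]
      apply div_nonneg _ (by positivity)
      have : (1 - δ) * (x + δ) * (1 + δ * x) - (1 + δ) * x * (1 + δ * x)
          + (1 + δ) * δ * x * (x + δ) = (1 - δ) * δ * (x - 1) ^ 2 := by ring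
      rw [this]
      exact mul_nonneg (mul_nonneg (by linarith) hδ.le) (sq_nonneg _)
  intro x hx
  have := hmono (Set.mem_Ici.mpr le_rfl) (Set.mem_Ici.mpr hx) hx
  simp only [hf] at this
  simp only [Real.log_one, mul_zero, mul_one] at this
  linarith [this]



lemma real_core (δ M N a g : ℝ) (hδ : 0 < δ) (hδ1 : δ ≤ 1) (hM : 0 < M) (hN : 0 < N)
    (ha : 0 < a) (hg : 0 < g) :
    Real.log (((a * (M + δ * N) + M * g) * (δ * M + N)) /
        ((M + δ * N) * (a * (δ * M + N) + δ * M * g)))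
      ≤ (1 - δ) / (1 + δ) * Real.log ((a + g) / a) := by
  set ρ := (a + g) / a with hρdef
  have hρ1 : 1 < ρ := by
    rw [hρdef, lt_div_iff₀ ha]; linarith
  set x := Real.sqrt ρ with hx
  have hx1 : 1 < x := by
    rw [hx]; nlinarith [Real.sq_sqrt (by linarith : (0:ℝ) ≤ ρ), Real.sqrt_nonneg ρ]
  have hx2 : x ^ 2 = ρ := Real.sq_sqrt (by linarith)
  have hgx : g = a * (x ^ 2 - 1) := by
    rw [hx2, hρdef]; field_simp; ring
  have hNum : 0 < (a * (M + δ * N) + M * g) * (δ * M + N) := by positivity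
  have hDen : 0 < (M + δ * N) * (a * (δ * M + N) + δ * M * g) := by positivity
  have hδx : (0:ℝ) < 1 + δ * x := by nlinarith
  have hxδ : (0:ℝ) < x + δ := by nlinarith
  -- polynomial step
  have hpoly : (a * (M + δ * N) + M * g) * (δ * M + N) * (1 + δ * x) ^ 2
      ≤ (x + δ) ^ 2 * ((M + δ * N) * (a * (δ * M + N) + δ * M * g)) := by
    have hid : (x + δ) ^ 2 * ((M + δ * N) * (a * (δ * M + N) + δ * M * (a * (x ^ 2 - 1))))
        - (a * (M + δ * N) + M * (a * (x ^ 2 - 1))) * (δ * M + N) * (1 + δ * x) ^ 2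
        = a * (δ * (1 - δ ^ 2) * ((x ^ 2 - 1) * (N - x * M) ^ 2)) := by ring
    rw [hgx]
    nlinarith [hid, mul_nonneg (mul_nonneg ha.le (mul_nonneg (mul_nonneg hδ.le
      (by nlinarith : (0:ℝ) ≤ 1 - δ ^ 2)) (by nlinarith : (0:ℝ) ≤ x ^ 2 - 1)))
      (sq_nonneg (N - x * M))]
  have hZle : ((a * (M + δ * N) + M * g) * (δ * M + N)) /
      ((M + δ * N) * (a * (δ * M + N) + δ * M * g)) ≤ ((x + δ) / (1 + δ * x)) ^ 2 := by
    rw [div_pow, div_le_div_iff₀ hDen (by positivity)]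
    calc (a * (M + δ * N) + M * g) * (δ * M + N) * (1 + δ * x) ^ 2
        ≤ (x + δ) ^ 2 * ((M + δ * N) * (a * (δ * M + N) + δ * M * g)) := hpoly
      _ = (x + δ) ^ 2 * ((M + δ * N) * (a * (δ * M + N) + δ * M * g)) := rfl
  have hlog1 : Real.log (((a * (M + δ * N) + M * g) * (δ * M + N)) /
      ((M + δ * N) * (a * (δ * M + N) + δ * M * g)))
      ≤ Real.log (((x + δ) / (1 + δ * x)) ^ 2) :=
    Real.log_le_log (by positivity) hZle
  have hlog2 : Real.log (((x + δ) / (1 + δ * x)) ^ 2)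
      = 2 * (Real.log (x + δ) - Real.log (1 + δ * x)) := by
    rw [Real.log_pow, Real.log_div hxδ.ne' hδx.ne']; ring
  have hlog3 := log_mobius_le δ hδ hδ1 x hx1.le
  have hlogρ : Real.log ρ = 2 * Real.log x := by
    rw [← hx2, Real.log_pow]; push_cast; ring
  calc _ ≤ Real.log (((x + δ) / (1 + δ * x)) ^ 2) := hlog1
    _ = 2 * (Real.log (x + δ) - Real.log (1 + δ * x)) := hlog2
    _ ≤ 2 * ((1 - δ) / (1 + δ) * Real.log x) := by linarith
    _ = (1 - δ) / (1 + δ) * Real.log ρ := by rw [hlogρ]; ring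




lemma iSup_ratio_le {E : Type*} [MeasurableSpace E] (p q : Measure E) (c : ℝ≥0∞)
    (h : ∀ A : Set E, MeasurableSet A → p A ≤ c * q A) :
    (⨆ A : {s : Set E // MeasurableSet s}, p A.1 / q A.1) ≤ c :=
  iSup_le fun A => ENNReal.div_le_of_le_mul (h A.1 A.2)

set_option maxHeartbeats 1000000 in
lemma hilbert_contract {E : Type*} [MeasurableSpace E]
    (K : Kernel E E) [IsMarkovKernel K] (ε : ℝ) (hε0 : 0 < ε) (hε1 : ε ≤ 1)
    (lam : Measure E)
    (hbd : ∀ x : E, ∀ A : Set E, MeasurableSet A →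
      ENNReal.ofReal ε * lam A ≤ K x A ∧ K x A ≤ ENNReal.ofReal ε⁻¹ * lam A)
    (μ ν : Measure E) [IsFiniteMeasure μ] [IsFiniteMeasure ν]
    (hpos : 0 < hilbertDist μ ν) :
    hilbertDist (μ.bind (fun x => K x)) (ν.bind (fun x => K x))
      ≤ (1 - ε ^ 2) / (1 + ε ^ 2) * hilbertDist μ ν := by
  classical
  set B1 := ⨆ A : {s : Set E // MeasurableSet s}, μ A.1 / ν A.1 with hB1
  set B2 := ⨆ A : {s : Set E // MeasurableSet s}, ν A.1 / μ A.1 with hB2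
  have hdist : hilbertDist μ ν = Real.log ((B1 * B2).toReal) := rfl
  -- basic facts about B1, B2
  have hprod_ne_top : B1 * B2 ≠ ∞ := by
    intro h
    rw [hdist, h] at hpos; simp at hpos
  have hprod_ne_zero : B1 * B2 ≠ 0 := by
    intro h
    rw [hdist, h] at hpos; simp at hpos
  have hprod_gt_one : 1 < (B1 * B2).toReal := by
    by_contra h
    push_neg at h
    have := Real.log_nonpos (ENNReal.toReal_nonneg) h
    rw [hdist] at hpos; linarith
  have hB1top : B1 ≠ ∞ := by
    intro h; rw [h] at hprod_ne_top hprod_ne_zero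
    rcases eq_or_ne B2 0 with h2 | h2
    · rw [h2, mul_zero] at hprod_ne_zero; exact hprod_ne_zero rfl
    · rw [ENNReal.top_mul h2] at hprod_ne_top; exact hprod_ne_top rfl
  have hB2top : B2 ≠ ∞ := by
    intro h; rw [h] at hprod_ne_top hprod_ne_zero
    rcases eq_or_ne B1 0 with h2 | h2
    · rw [h2, zero_mul] at hprod_ne_zero; exact hprod_ne_zero rfl
    · rw [ENNReal.mul_top h2] at hprod_ne_top; exact hprod_ne_top rfl
  have hB1zero : B1 ≠ 0 := fun h => hprod_ne_zero (by rw [h, zero_mul])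
  have hB2zero : B2 ≠ 0 := fun h => hprod_ne_zero (by rw [h, mul_zero])
  -- set comparison
  have hμB1 : ∀ A : Set E, MeasurableSet A → μ A ≤ B1 * ν A := by
    intro A hA
    have h1 : μ A / ν A ≤ B1 := le_iSup (fun A : {s : Set E // MeasurableSet s} => μ A.1 / ν A.1) ⟨A, hA⟩
    exact (ENNReal.div_le_iff_le_mul (Or.inr hB1top) (Or.inl (measure_ne_top ν A))).mp h1
  have hνB2 : ∀ A : Set E, MeasurableSet A → ν A ≤ B2 * μ A := by
    intro A hA
    have h1 : ν A / μ A ≤ B2 := le_iSup (fun A : {s : Set E // MeasurableSet s} => ν A.1 / μ A.1) ⟨A, hA⟩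
    exact (ENNReal.div_le_iff_le_mul (Or.inr hB2top) (Or.inl (measure_ne_top μ A))).mp h1
  set α : ℝ≥0∞ := B2⁻¹ with hα
  set β : ℝ≥0∞ := B1 with hβ
  have hαzero : α ≠ 0 := ENNReal.inv_ne_zero.mpr hB2top
  have hαtop : α ≠ ∞ := ENNReal.inv_ne_top.mpr hB2zero
  have hαB2 : α * B2 = 1 := ENNReal.inv_mul_cancel hB2zero hB2top
  have hle1 : α • ν ≤ μ := by
    rw [Measure.le_iff]
    intro A hA
    calc (α • ν) A = α * ν A := rfl
      _ ≤ α * (B2 * μ A) := mul_le_mul_right (hνB2 A hA) α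
      _ = (α * B2) * μ A := by ring
      _ = μ A := by rw [hαB2, one_mul]
  have hle2 : μ ≤ β • ν := by
    rw [Measure.le_iff]
    intro A hA
    calc μ A ≤ B1 * ν A := hμB1 A hA
      _ = (β • ν) A := rfl
  have hαβ : α < β := by
    have h1 : 1 < B1 * B2 := by
      rw [← ENNReal.toReal_one] at hprod_gt_one
      exact (ENNReal.toReal_lt_toReal ENNReal.one_ne_top hprod_ne_top).mp hprod_gt_one
    calc α = α * 1 := (mul_one α).symm
      _ < α * (B1 * B2) := by
          rw [mul_comm α, mul_comm α]; exact ENNReal.mul_lt_mul_left hαzero hαtop h1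
      _ = (α * B2) * B1 := by ring
      _ = β := by rw [hαB2, one_mul]
  -- decomposition measures
  haveI : IsFiniteMeasure (α • ν) := ν.smul_finite hαtop
  haveI : IsFiniteMeasure (β • ν) := ν.smul_finite hB1top
  set m : Measure E := μ - α • ν with hm
  set n : Measure E := β • ν - μ with hn
  have hmadd : m + α • ν = μ := Measure.sub_add_cancel_of_le hle1
  have hnadd : n + μ = β • ν := Measure.sub_add_cancel_of_le hle2
  set M : ℝ≥0∞ := m Set.univ with hM
  set N : ℝ≥0∞ := n Set.univ with hN
  have hMtop : M ≠ ∞ := by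
    have : m ≤ μ := Measure.sub_le
    exact (lt_of_le_of_lt (this Set.univ) (measure_lt_top μ _)).ne
  have hNtop : N ≠ ∞ := by
    have : n ≤ β • ν := Measure.sub_le
    exact (lt_of_le_of_lt (this Set.univ) (measure_lt_top (β • ν) _)).ne
  -- kernel integral notation
  set T : Measure E → Set E → ℝ≥0∞ := fun σ A => ∫⁻ x, K x A ∂σ with hT
  have hTapp : ∀ (σ : Measure E) (A : Set E), MeasurableSet A →
      (σ.bind (fun x => K x)) A = T σ A := by
    intro σ A hA
    exact Measure.bind_apply hA (Kernel.measurable K).aemeasurable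
  have hTfin : ∀ (σ : Measure E) (A : Set E), T σ A ≤ σ Set.univ := by
    intro σ A
    calc T σ A ≤ ∫⁻ _, 1 ∂σ := lintegral_mono fun x => prob_le_one
      _ = σ Set.univ := lintegral_one
  have hTlow : ∀ (σ : Measure E) (A : Set E), MeasurableSet A →
      ENNReal.ofReal ε * lam A * σ Set.univ ≤ T σ A := by
    intro σ A hA
    calc ENNReal.ofReal ε * lam A * σ Set.univ = ∫⁻ _, ENNReal.ofReal ε * lam A ∂σ := by
          rw [lintegral_const]
      _ ≤ T σ A := lintegral_mono fun x => (hbd x A hA).1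
  have hThigh : ∀ (σ : Measure E) (A : Set E), MeasurableSet A →
      T σ A ≤ ENNReal.ofReal ε⁻¹ * lam A * σ Set.univ := by
    intro σ A hA
    calc T σ A ≤ ∫⁻ _, ENNReal.ofReal ε⁻¹ * lam A ∂σ := lintegral_mono fun x => (hbd x A hA).2
      _ = _ := by rw [lintegral_const]
  -- linearity
  have hTμ : ∀ A : Set E, T μ A = T m A + α * T ν A := by
    intro A
    rw [hT]
    conv_lhs => rw [← hmadd]
    simp only [lintegral_add_measure, lintegral_smul_measure, smul_eq_mul]
  have hTn : ∀ A : Set E, T n A + T μ A = β * T ν A := by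
    intro A
    rw [hT]
    simp only []
    rw [← lintegral_add_measure, hnadd, lintegral_smul_measure, smul_eq_mul]
  set γ : ℝ≥0∞ := β - α with hγ
  have hγα : γ + α = β := tsub_add_cancel_of_le hαβ.le
  have hγzero : γ ≠ 0 := by
    intro h
    rw [h, zero_add] at hγα
    exact absurd hγα hαβ.ne
  have hγtop : γ ≠ ∞ := by
    intro h
    rw [h] at hγα
    simp at hγα
    exact hB1top hγα.symm
  have hTνfin : ∀ A : Set E, T ν A ≠ ∞ :=
    fun A => (lt_of_le_of_lt (hTfin ν A) (measure_lt_top ν _)).ne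
  have hTmn : ∀ A : Set E, T m A + T n A = γ * T ν A := by
    intro A
    have h1 : T m A + T n A + (α * T ν A + T μ A)
        = γ * T ν A + (α * T ν A + T μ A) := by
      have e1 : T m A + α * T ν A = T μ A := (hTμ A).symm
      have e2 : T n A + T μ A = β * T ν A := hTn A
      have e3 : β * T ν A = γ * T ν A + α * T ν A := by
        rw [← add_mul, hγα]
      calc T m A + T n A + (α * T ν A + T μ A)
          = (T m A + α * T ν A) + (T n A + T μ A) := by ring
        _ = T μ A + (γ * T ν A + α * T ν A) := by rw [e1, e2, e3]
        _ = γ * T ν A + (α * T ν A + T μ A) := by ring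
    have hfin : α * T ν A + T μ A ≠ ∞ := by
      apply ENNReal.add_ne_top.mpr
      constructor
      · exact ENNReal.mul_ne_top hαtop (hTνfin A)
      · exact (lt_of_le_of_lt (hTfin μ A) (measure_lt_top μ _)).ne
    exact (ENNReal.add_left_inj hfin).mp h1
  -- degenerate case helper
  have hRHS0 : 0 ≤ (1 - ε ^ 2) / (1 + ε ^ 2) * hilbertDist μ ν := by
    apply mul_nonneg _ hpos.le
    apply div_nonneg <;> nlinarith
  have hdeg : ∀ c : ℝ≥0∞, c ≠ 0 → c ≠ ∞ → (∀ A : Set E, MeasurableSet A → T μ A = c * T ν A) →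
      hilbertDist (μ.bind (fun x => K x)) (ν.bind (fun x => K x))
        ≤ (1 - ε ^ 2) / (1 + ε ^ 2) * hilbertDist μ ν := by
    intro c hc0 hctop hceq
    have hS1 : (⨆ A : {s : Set E // MeasurableSet s},
        (μ.bind (fun x => K x)) A.1 / (ν.bind (fun x => K x)) A.1) ≤ c := by
      apply iSup_ratio_le
      intro A hA
      rw [hTapp μ A hA, hTapp ν A hA, hceq A hA]
    have hS2 : (⨆ A : {s : Set E // MeasurableSet s},
        (ν.bind (fun x => K x)) A.1 / (μ.bind (fun x => K x)) A.1) ≤ c⁻¹ := by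
      apply iSup_ratio_le
      intro A hA
      rw [hTapp μ A hA, hTapp ν A hA, hceq A hA, ← mul_assoc,
        ENNReal.inv_mul_cancel hc0 hctop, one_mul]
    have hprod : (⨆ A : {s : Set E // MeasurableSet s},
        (μ.bind (fun x => K x)) A.1 / (ν.bind (fun x => K x)) A.1) *
        (⨆ A : {s : Set E // MeasurableSet s},
        (ν.bind (fun x => K x)) A.1 / (μ.bind (fun x => K x)) A.1) ≤ 1 := by
      calc _ ≤ c * c⁻¹ := mul_le_mul' hS1 hS2
        _ = 1 := ENNReal.mul_inv_cancel hc0 hctop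
    have : hilbertDist (μ.bind (fun x => K x)) (ν.bind (fun x => K x)) ≤ 0 := by
      apply Real.log_nonpos ENNReal.toReal_nonneg
      calc _ ≤ (1 : ℝ≥0∞).toReal := ENNReal.toReal_mono ENNReal.one_ne_top hprod
        _ = 1 := ENNReal.toReal_one
    linarith
  rcases eq_or_ne M 0 with hM0 | hMzero
  · -- μ = α • ν
    have hm0 : m = 0 := Measure.measure_univ_eq_zero.mp hM0
    apply hdeg α hαzero hαtop
    intro A hA
    rw [hTμ A, hm0]
    simp [hT]
  rcases eq_or_ne N 0 with hN0 | hNzero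
  · -- μ = β • ν
    have hn0 : n = 0 := Measure.measure_univ_eq_zero.mp hN0
    apply hdeg β hB1zero hB1top
    intro A hA
    have := hTn A
    rw [hn0] at this
    simpa [hT] using this
  -- main case : 0 < M, 0 < N
  set e₁ : ℝ≥0∞ := ENNReal.ofReal ε with he₁
  set e₂ : ℝ≥0∞ := ENNReal.ofReal ε⁻¹ with he₂
  have he₁0 : e₁ ≠ 0 := (ENNReal.ofReal_pos.mpr hε0).ne'
  have he₂0 : e₂ ≠ 0 := (ENNReal.ofReal_pos.mpr (inv_pos.mpr hε0)).ne'
  have he₁top : e₁ ≠ ∞ := ENNReal.ofReal_ne_top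
  have he₂top : e₂ ≠ ∞ := ENNReal.ofReal_ne_top
  set D₁ : ℝ≥0∞ := e₂ * M + e₁ * N with hD₁
  set D₂ : ℝ≥0∞ := e₁ * M + e₂ * N with hD₂
  set P₁ : ℝ≥0∞ := α * D₁ + e₂ * M * γ with hP₁
  set P₂ : ℝ≥0∞ := α * D₂ + e₁ * M * γ with hP₂
  have hD₁0 : D₁ ≠ 0 := by
    intro h
    rw [hD₁, add_eq_zero] at h
    exact hMzero (by simpa [he₂0] using mul_eq_zero.mp h.1)
  have hD₂0 : D₂ ≠ 0 := by
    intro h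
    rw [hD₂, add_eq_zero] at h
    exact hMzero (by simpa [he₁0] using mul_eq_zero.mp h.1)
  have hD₁top : D₁ ≠ ∞ := by
    rw [hD₁]
    exact ENNReal.add_ne_top.mpr ⟨ENNReal.mul_ne_top he₂top hMtop, ENNReal.mul_ne_top he₁top hNtop⟩
  have hD₂top : D₂ ≠ ∞ := by
    rw [hD₂]
    exact ENNReal.add_ne_top.mpr ⟨ENNReal.mul_ne_top he₁top hMtop, ENNReal.mul_ne_top he₂top hNtop⟩
  have hP₁0 : P₁ ≠ 0 := by
    intro h
    rw [hP₁, add_eq_zero] at h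
    exact hαzero (by simpa [hD₁0] using mul_eq_zero.mp h.1)
  have hP₂0 : P₂ ≠ 0 := by
    intro h
    rw [hP₂, add_eq_zero] at h
    exact hαzero (by simpa [hD₂0] using mul_eq_zero.mp h.1)
  have hP₁top : P₁ ≠ ∞ := by
    rw [hP₁]
    exact ENNReal.add_ne_top.mpr ⟨ENNReal.mul_ne_top hαtop hD₁top,
      ENNReal.mul_ne_top (ENNReal.mul_ne_top he₂top hMtop) hγtop⟩
  have hP₂top : P₂ ≠ ∞ := by
    rw [hP₂]
    exact ENNReal.add_ne_top.mpr ⟨ENNReal.mul_ne_top hαtop hD₂top,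
      ENNReal.mul_ne_top (ENNReal.mul_ne_top he₁top hMtop) hγtop⟩
  -- core inequalities
  have hcore1 : ∀ A : Set E, MeasurableSet A → e₁ * N * T m A ≤ e₂ * M * T n A := by
    intro A hA
    calc e₁ * N * T m A ≤ e₁ * N * (e₂ * lam A * M) :=
          mul_le_mul_right (hThigh m A hA) _
      _ = (e₁ * lam A * N) * (e₂ * M) := by ring
      _ ≤ T n A * (e₂ * M) := mul_le_mul_left (hTlow n A hA) _
      _ = e₂ * M * T n A := by ring
  have hcore2 : ∀ A : Set E, MeasurableSet A → e₁ * M * T n A ≤ e₂ * N * T m A := by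
    intro A hA
    calc e₁ * M * T n A ≤ e₁ * M * (e₂ * lam A * N) :=
          mul_le_mul_right (hThigh n A hA) _
      _ = (e₁ * lam A * M) * (e₂ * N) := by ring
      _ ≤ T m A * (e₂ * N) := mul_le_mul_left (hTlow m A hA) _
      _ = e₂ * N * T m A := by ring
  -- the two claims
  have hclaimA : ∀ A : Set E, MeasurableSet A → D₁ * T μ A ≤ P₁ * T ν A := by
    intro A hA
    calc D₁ * T μ A = D₁ * (T m A + α * T ν A) := by rw [hTμ A]
      _ = (e₂ * M * T m A + e₁ * N * T m A) + α * D₁ * T ν A := by rw [hD₁]; ring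
      _ ≤ (e₂ * M * T m A + e₂ * M * T n A) + α * D₁ * T ν A := by
          exact add_le_add (add_le_add le_rfl (hcore1 A hA)) le_rfl
      _ = e₂ * M * (T m A + T n A) + α * D₁ * T ν A := by ring
      _ = e₂ * M * (γ * T ν A) + α * D₁ * T ν A := by rw [hTmn A]
      _ = P₁ * T ν A := by rw [hP₁]; ring
  have hclaimB : ∀ A : Set E, MeasurableSet A → P₂ * T ν A ≤ D₂ * T μ A := by
    intro A hA
    calc P₂ * T ν A = e₁ * M * (γ * T ν A) + α * D₂ * T ν A := by rw [hP₂]; ring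
      _ = e₁ * M * (T m A + T n A) + α * D₂ * T ν A := by rw [hTmn A]
      _ = (e₁ * M * T m A + e₁ * M * T n A) + α * D₂ * T ν A := by ring
      _ ≤ (e₁ * M * T m A + e₂ * N * T m A) + α * D₂ * T ν A := by
          exact add_le_add (add_le_add le_rfl (hcore2 A hA)) le_rfl
      _ = D₂ * T m A + α * D₂ * T ν A := by rw [hD₂]; ring
      _ = D₂ * T μ A := by rw [hTμ A]; ring
  -- sup bounds
  have hS1 : (⨆ A : {s : Set E // MeasurableSet s},
      (μ.bind (fun x => K x)) A.1 / (ν.bind (fun x => K x)) A.1) ≤ P₁ / D₁ := by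
    apply iSup_ratio_le
    intro A hA
    rw [hTapp μ A hA, hTapp ν A hA]
    calc T μ A = D₁⁻¹ * (D₁ * T μ A) := by
          rw [← mul_assoc, ENNReal.inv_mul_cancel hD₁0 hD₁top, one_mul]
      _ ≤ D₁⁻¹ * (P₁ * T ν A) := mul_le_mul_right (hclaimA A hA) _
      _ = (P₁ / D₁) * T ν A := by rw [ENNReal.div_eq_inv_mul]; ring
  have hS2 : (⨆ A : {s : Set E // MeasurableSet s},
      (ν.bind (fun x => K x)) A.1 / (μ.bind (fun x => K x)) A.1) ≤ D₂ / P₂ := by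
    apply iSup_ratio_le
    intro A hA
    rw [hTapp μ A hA, hTapp ν A hA]
    calc T ν A = P₂⁻¹ * (P₂ * T ν A) := by
          rw [← mul_assoc, ENNReal.inv_mul_cancel hP₂0 hP₂top, one_mul]
      _ ≤ P₂⁻¹ * (D₂ * T μ A) := mul_le_mul_right (hclaimB A hA) _
      _ = (D₂ / P₂) * T μ A := by rw [ENNReal.div_eq_inv_mul]; ring
  -- pass to real numbers
  set Mr := M.toReal with hMr
  set Nr := N.toReal with hNr
  set ar := α.toReal with har
  set gr := γ.toReal with hgr
  have hMrpos : 0 < Mr := ENNReal.toReal_pos hMzero hMtop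
  have hNrpos : 0 < Nr := ENNReal.toReal_pos hNzero hNtop
  have harpos : 0 < ar := ENNReal.toReal_pos hαzero hαtop
  have hgrpos : 0 < gr := ENNReal.toReal_pos hγzero hγtop
  have he₁r : e₁.toReal = ε := ENNReal.toReal_ofReal hε0.le
  have he₂r : e₂.toReal = ε⁻¹ := ENNReal.toReal_ofReal (inv_pos.mpr hε0).le
  have hD₁r : D₁.toReal = ε⁻¹ * Mr + ε * Nr := by
    rw [hD₁, ENNReal.toReal_add (ENNReal.mul_ne_top he₂top hMtop)
      (ENNReal.mul_ne_top he₁top hNtop), ENNReal.toReal_mul, ENNReal.toReal_mul, he₁r, he₂r]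
  have hD₂r : D₂.toReal = ε * Mr + ε⁻¹ * Nr := by
    rw [hD₂, ENNReal.toReal_add (ENNReal.mul_ne_top he₁top hMtop)
      (ENNReal.mul_ne_top he₂top hNtop), ENNReal.toReal_mul, ENNReal.toReal_mul, he₁r, he₂r]
  have hP₁r : P₁.toReal = ar * (ε⁻¹ * Mr + ε * Nr) + ε⁻¹ * Mr * gr := by
    rw [hP₁, ENNReal.toReal_add (ENNReal.mul_ne_top hαtop hD₁top)
      (ENNReal.mul_ne_top (ENNReal.mul_ne_top he₂top hMtop) hγtop),
      ENNReal.toReal_mul, ENNReal.toReal_mul, ENNReal.toReal_mul, hD₁r, he₂r]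
  have hP₂r : P₂.toReal = ar * (ε * Mr + ε⁻¹ * Nr) + ε * Mr * gr := by
    rw [hP₂, ENNReal.toReal_add (ENNReal.mul_ne_top hαtop hD₂top)
      (ENNReal.mul_ne_top (ENNReal.mul_ne_top he₁top hMtop) hγtop),
      ENNReal.toReal_mul, ENNReal.toReal_mul, ENNReal.toReal_mul, hD₂r, he₁r]
  have hD₁rpos : 0 < D₁.toReal := ENNReal.toReal_pos hD₁0 hD₁top
  have hD₂rpos : 0 < D₂.toReal := ENNReal.toReal_pos hD₂0 hD₂top
  have hP₁rpos : 0 < P₁.toReal := ENNReal.toReal_pos hP₁0 hP₁top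
  have hP₂rpos : 0 < P₂.toReal := ENNReal.toReal_pos hP₂0 hP₂top
  set δ := ε ^ 2 with hδ
  have hδpos : 0 < δ := by positivity
  have hδ1 : δ ≤ 1 := by nlinarith
  have hXr : (P₁.toReal * D₂.toReal) / (D₁.toReal * P₂.toReal)
      = ((ar * (Mr + δ * Nr) + Mr * gr) * (δ * Mr + Nr)) /
        ((Mr + δ * Nr) * (ar * (δ * Mr + Nr) + δ * Mr * gr)) := by
    rw [hP₁r, hP₂r, hD₁r, hD₂r, hδ]
    rw [div_eq_div_iff (by positivity) (by positivity)]
    field_simp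
  -- identify the hilbert distance of μ ν
  have hrr : (ar + gr) / ar = (B1 * B2).toReal := by
    have h1 : ar + gr = β.toReal := by
      rw [har, hgr, ← ENNReal.toReal_add hαtop hγtop, add_comm, hγα]
    have h2 : ar = (B2.toReal)⁻¹ := by rw [har, hα, ENNReal.toReal_inv]
    have hB2rpos : 0 < B2.toReal := ENNReal.toReal_pos hB2zero hB2top
    have hB2ne : B2.toReal ≠ 0 := hB2rpos.ne'
    rw [h1, h2, ENNReal.toReal_mul, hβ]
    field_simp
  -- final chain
  set S1 := ⨆ A : {s : Set E // MeasurableSet s},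
      (μ.bind (fun x => K x)) A.1 / (ν.bind (fun x => K x)) A.1 with hS1d
  set S2 := ⨆ A : {s : Set E // MeasurableSet s},
      (ν.bind (fun x => K x)) A.1 / (μ.bind (fun x => K x)) A.1 with hS2d
  have hbind : hilbertDist (μ.bind (fun x => K x)) (ν.bind (fun x => K x))
      = Real.log ((S1 * S2).toReal) := rfl
  rcases le_or_gt ((S1 * S2).toReal) 1 with hcase | hcase
  · rw [hbind]
    calc Real.log ((S1 * S2).toReal) ≤ 0 := Real.log_nonpos ENNReal.toReal_nonneg hcase
      _ ≤ _ := hRHS0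
  · have hXtop : (P₁ / D₁) * (D₂ / P₂) ≠ ∞ :=
      ENNReal.mul_ne_top (ENNReal.div_lt_top hP₁top hD₁0).ne (ENNReal.div_lt_top hD₂top hP₂0).ne
    have hmono : (S1 * S2).toReal ≤ ((P₁ / D₁) * (D₂ / P₂)).toReal :=
      ENNReal.toReal_mono hXtop (mul_le_mul' hS1 hS2)
    have hXval : ((P₁ / D₁) * (D₂ / P₂)).toReal
        = (P₁.toReal * D₂.toReal) / (D₁.toReal * P₂.toReal) := by
      rw [ENNReal.toReal_mul, ENNReal.toReal_div, ENNReal.toReal_div]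
      field_simp
    rw [hbind, hdist]
    calc Real.log ((S1 * S2).toReal)
        ≤ Real.log (((P₁ / D₁) * (D₂ / P₂)).toReal) :=
          Real.log_le_log (by linarith) hmono
      _ = Real.log (((ar * (Mr + δ * Nr) + Mr * gr) * (δ * Mr + Nr)) /
            ((Mr + δ * Nr) * (ar * (δ * Mr + Nr) + δ * Mr * gr))) := by rw [hXval, hXr]
      _ ≤ (1 - δ) / (1 + δ) * Real.log ((ar + gr) / ar) :=
          real_core δ Mr Nr ar gr hδpos hδ1 hMrpos hNrpos harpos hgrpos
      _ = (1 - ε ^ 2) / (1 + ε ^ 2) * Real.log ((B1 * B2).toReal) := by rw [hrr, hδ]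

/-- if `K` is mixing with constant `ε ∈ (0,1]`, then its Birkhoff contraction
coefficient satisfies `τ(K) ≤ (1 − ε²)/(1 + ε²)`. -/
theorem birkhoff_coeff_of_mixing {E : Type*} [MeasurableSpace E]
    (K : Kernel E E) [IsMarkovKernel K] (ε : ℝ) (hε0 : 0 < ε) (hε1 : ε ≤ 1)
    (hmix : IsMixing K ε) :
    birkhoffCoeff (fun μ => μ.bind (fun x => K x)) ≤ (1 - ε ^ 2) / (1 + ε ^ 2) := by
  obtain ⟨lam, hlamfin, hlamne, hbd⟩ := hmix
  apply Real.sSup_le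
  · rintro r ⟨μ, ν, hμ, hν, hcomp, hpos, rfl⟩
    rw [div_le_iff₀ hpos]
    exact hilbert_contract K ε hε0 hε1 lam hbd μ ν hpos
  · apply div_nonneg (by nlinarith) (by positivity)
end

section
/- If a nonnegative kernel K on E is mixing with constant ε ∈ (0,1], then for any nonzero finite measures μ, μ' ∈ M⁺(E): h(Kμ, Kμ') ≤ (1/ε²) · ‖ μ/μ(E) − μ'/μ'(E) ‖_tv, where h is the Hilbert projective metric and ‖·‖_tv is total variation. -/
open MeasureTheory ENNReal ProbabilityTheory
open scoped NNReal

noncomputable def tvDist {E : Type*} [MeasurableSpace E] (μ ν : Measure E) : ℝ :=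
  2 * ⨆ A : {s : Set E // MeasurableSet s}, |(μ A.1).toReal - (ν A.1).toReal|

lemma mixing_key {E : Type*} [MeasurableSpace E] (K : Kernel E E)
    (lam : Measure E) [IsFiniteMeasure lam] (ε : ℝ) (hε0 : 0 < ε)
    (hbound : ∀ x : E, ∀ A : Set E, MeasurableSet A →
      ENNReal.ofReal ε * lam A ≤ K x A ∧ K x A ≤ ENNReal.ofReal ε⁻¹ * lam A)
    (ν ν' : Measure E) [IsProbabilityMeasure ν] [IsProbabilityMeasure ν']
    (s : Set E) (hs : MeasurableSet s)
    (hle_s : ν'.restrict s ≤ ν.restrict s)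
    (hle_sc : ν.restrict sᶜ ≤ ν'.restrict sᶜ)
    (A : Set E) (hA : MeasurableSet A) :
    ∫⁻ x, K x A ∂ν ≤
      (1 + (ENNReal.ofReal ε⁻¹) ^ 2 * (ν s - ν' s)) * ∫⁻ x, K x A ∂ν' := by
  set e := ENNReal.ofReal ε with he
  set e' := ENNReal.ofReal ε⁻¹ with he'
  have hee' : e' * e = 1 := by
    rw [he, he', ← ENNReal.ofReal_mul (by positivity), inv_mul_cancel₀ hε0.ne',
      ENNReal.ofReal_one]
  set ρ : Measure E := ν.restrict s - ν'.restrict s with hρdef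
  have hρ : ρ + ν'.restrict s = ν.restrict s := Measure.sub_add_cancel_of_le hle_s
  have hρuniv : ρ Set.univ = ν s - ν' s := by
    rw [hρdef, Measure.sub_apply MeasurableSet.univ hle_s,
      Measure.restrict_apply_univ, Measure.restrict_apply_univ]
  set δ := ν s - ν' s with hδ
  have hIν : ∫⁻ x, K x A ∂ν
      = ∫⁻ x, K x A ∂ρ + ∫⁻ x, K x A ∂(ν'.restrict s) + ∫⁻ x, K x A ∂(ν.restrict sᶜ) := by
    conv_lhs => rw [← Measure.restrict_add_restrict_compl (μ := ν) hs, ← hρ]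
    rw [lintegral_add_measure, lintegral_add_measure]
  have hIν' : ∫⁻ x, K x A ∂(ν'.restrict s) + ∫⁻ x, K x A ∂(ν.restrict sᶜ)
      ≤ ∫⁻ x, K x A ∂ν' := by
    conv_rhs => rw [← Measure.restrict_add_restrict_compl (μ := ν') hs]
    rw [lintegral_add_measure]
    exact add_le_add le_rfl (lintegral_mono' hle_sc le_rfl)
  have hIρ : ∫⁻ x, K x A ∂ρ ≤ e' * lam A * δ := by
    calc ∫⁻ x, K x A ∂ρ ≤ ∫⁻ _, e' * lam A ∂ρ :=
          lintegral_mono fun x => (hbound x A hA).2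
      _ = e' * lam A * ρ Set.univ := lintegral_const _
      _ = e' * lam A * δ := by rw [hρuniv]
  have hlow : e * lam A ≤ ∫⁻ x, K x A ∂ν' := by
    calc e * lam A = ∫⁻ _, e * lam A ∂ν' := by
          rw [lintegral_const, measure_univ, mul_one]
      _ ≤ ∫⁻ x, K x A ∂ν' := lintegral_mono fun x => (hbound x A hA).1
  calc ∫⁻ x, K x A ∂ν
      = ∫⁻ x, K x A ∂ρ + (∫⁻ x, K x A ∂(ν'.restrict s) + ∫⁻ x, K x A ∂(ν.restrict sᶜ)) := by
        rw [hIν, add_assoc]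
    _ ≤ e' * lam A * δ + ∫⁻ x, K x A ∂ν' := add_le_add hIρ hIν'
    _ = e' ^ 2 * δ * (e * lam A) + ∫⁻ x, K x A ∂ν' := by
        rw [show e' ^ 2 * δ * (e * lam A) = (e' * e) * (e' * lam A * δ) by ring, hee', one_mul]
    _ ≤ e' ^ 2 * δ * ∫⁻ x, K x A ∂ν' + ∫⁻ x, K x A ∂ν' :=
        add_le_add (mul_le_mul_right hlow _) le_rfl
    _ = (1 + e' ^ 2 * δ) * ∫⁻ x, K x A ∂ν' := by ring

/-- if `K` is mixing with constant `ε ∈ (0,1]`, then for nonzero finite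
measures `μ, μ'`, `h(Kμ, Kμ') ≤ (1/ε²)·‖μ/μ(E) − μ'/μ'(E)‖_tv`. -/
theorem hilbert_le_tv_of_mixing {E : Type*} [MeasurableSpace E]
    (K : Kernel E E) [IsMarkovKernel K] (ε : ℝ) (hε0 : 0 < ε) (hε1 : ε ≤ 1)
    (hmix : IsMixing K ε) (μ μ' : Measure E) [IsFiniteMeasure μ] [IsFiniteMeasure μ']
    (hμ : μ ≠ 0) (hμ' : μ' ≠ 0) :
    hilbertDist (μ.bind (fun x => K x)) (μ'.bind (fun x => K x)) ≤
      (1 / ε ^ 2) * tvDist ((μ Set.univ)⁻¹ • μ) ((μ' Set.univ)⁻¹ • μ') := by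
  obtain ⟨lam, hlamfin, hlam0, hbound⟩ := hmix
  haveI := hlamfin
  set m := μ Set.univ with hm
  set m' := μ' Set.univ with hm'
  have hm0 : m ≠ 0 := fun h => hμ (Measure.measure_univ_eq_zero.mp h)
  have hm'0 : m' ≠ 0 := fun h => hμ' (Measure.measure_univ_eq_zero.mp h)
  have hmtop : m ≠ ∞ := measure_ne_top μ _
  have hm'top : m' ≠ ∞ := measure_ne_top μ' _
  set ν : Measure E := m⁻¹ • μ with hν
  set ν' : Measure E := m'⁻¹ • μ' with hν'
  haveI : IsProbabilityMeasure ν :=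
    ⟨by rw [hν, Measure.smul_apply, smul_eq_mul, ENNReal.inv_mul_cancel hm0 hmtop]⟩
  haveI : IsProbabilityMeasure ν' :=
    ⟨by rw [hν', Measure.smul_apply, smul_eq_mul, ENNReal.inv_mul_cancel hm'0 hm'top]⟩
  obtain ⟨s, hs, h1, h2⟩ := hahn_decomposition (μ := ν) (ν := ν')
  have hle_s : ν'.restrict s ≤ ν.restrict s := by
    refine Measure.le_iff.mpr fun t ht => ?_
    rw [Measure.restrict_apply ht, Measure.restrict_apply ht]
    exact h1 _ (ht.inter hs) Set.inter_subset_right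
  have hle_sc : ν.restrict sᶜ ≤ ν'.restrict sᶜ := by
    refine Measure.le_iff.mpr fun t ht => ?_
    rw [Measure.restrict_apply ht, Measure.restrict_apply ht]
    exact h2 _ (ht.inter hs.compl) Set.inter_subset_right
  set e' := ENNReal.ofReal ε⁻¹ with he'
  set δ := ν s - ν' s with hδ
  set δ' := ν' sᶜ - ν sᶜ with hδ'
  set B := 1 + e' ^ 2 * δ with hB
  set B' := 1 + e' ^ 2 * δ' with hB'
  have key1 : ∀ A : Set E, MeasurableSet A →
      ∫⁻ x, K x A ∂ν ≤ B * ∫⁻ x, K x A ∂ν' :=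
    fun A hA => mixing_key K lam ε hε0 hbound ν ν' s hs hle_s hle_sc A hA
  have key2 : ∀ A : Set E, MeasurableSet A →
      ∫⁻ x, K x A ∂ν' ≤ B' * ∫⁻ x, K x A ∂ν := by
    intro A hA
    have h1' : ν'.restrict sᶜᶜ ≤ ν.restrict sᶜᶜ := by rw [compl_compl]; exact hle_s
    exact mixing_key K lam ε hε0 hbound ν' ν sᶜ hs.compl hle_sc h1' A hA
  -- rewrite bind applications
  have hKmeas : Measurable fun x : E => K x := K.measurable
  have hbindμ : ∀ A : Set E, MeasurableSet A →
      (μ.bind fun x => K x) A = m * ∫⁻ x, K x A ∂ν := by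
    intro A hA
    rw [Measure.bind_apply hA hKmeas.aemeasurable]
    have : μ = m • ν := by
      rw [hν, smul_smul, ENNReal.mul_inv_cancel hm0 hmtop, one_smul]
    conv_lhs => rw [this]
    rw [lintegral_smul_measure, smul_eq_mul]
  have hbindμ' : ∀ A : Set E, MeasurableSet A →
      (μ'.bind fun x => K x) A = m' * ∫⁻ x, K x A ∂ν' := by
    intro A hA
    rw [Measure.bind_apply hA hKmeas.aemeasurable]
    have : μ' = m' • ν' := by
      rw [hν', smul_smul, ENNReal.mul_inv_cancel hm'0 hm'top, one_smul]
    conv_lhs => rw [this]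
    rw [lintegral_smul_measure, smul_eq_mul]
  -- bound the sups
  set P := ⨆ A : {s : Set E // MeasurableSet s},
      (μ.bind fun x => K x) A.1 / (μ'.bind fun x => K x) A.1 with hP
  set Q := ⨆ A : {s : Set E // MeasurableSet s},
      (μ'.bind fun x => K x) A.1 / (μ.bind fun x => K x) A.1 with hQ
  have hPle : P ≤ m / m' * B := by
    refine iSup_le fun A => ?_
    rw [hbindμ A.1 A.2, hbindμ' A.1 A.2]
    refine ENNReal.div_le_of_le_mul ?_
    calc m * ∫⁻ x, K x A.1 ∂ν ≤ m * (B * ∫⁻ x, K x A.1 ∂ν') :=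
          mul_le_mul_right (key1 A.1 A.2) m
      _ = m / m' * B * (m' * ∫⁻ x, K x A.1 ∂ν') := by
          rw [div_eq_mul_inv,
            show m * m'⁻¹ * B * (m' * ∫⁻ x, K x A.1 ∂ν')
              = (m'⁻¹ * m') * (m * (B * ∫⁻ x, K x A.1 ∂ν')) by ring,
            ENNReal.inv_mul_cancel hm'0 hm'top, one_mul]
  have hQle : Q ≤ m' / m * B' := by
    refine iSup_le fun A => ?_
    rw [hbindμ A.1 A.2, hbindμ' A.1 A.2]
    refine ENNReal.div_le_of_le_mul ?_
    calc m' * ∫⁻ x, K x A.1 ∂ν' ≤ m' * (B' * ∫⁻ x, K x A.1 ∂ν) :=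
          mul_le_mul_right (key2 A.1 A.2) m'
      _ = m' / m * B' * (m * ∫⁻ x, K x A.1 ∂ν) := by
          rw [div_eq_mul_inv,
            show m' * m⁻¹ * B' * (m * ∫⁻ x, K x A.1 ∂ν)
              = (m⁻¹ * m) * (m' * (B' * ∫⁻ x, K x A.1 ∂ν)) by ring,
            ENNReal.inv_mul_cancel hm0 hmtop, one_mul]
  have hPQ : P * Q ≤ B * B' := by
    calc P * Q ≤ m / m' * B * (m' / m * B') := mul_le_mul' hPle hQle
      _ = (m'⁻¹ * m') * ((m⁻¹ * m) * (B * B')) := by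
          rw [div_eq_mul_inv, div_eq_mul_inv]; ring
      _ = B * B' := by
          rw [ENNReal.inv_mul_cancel hm'0 hm'top, ENNReal.inv_mul_cancel hm0 hmtop,
            one_mul, one_mul]
  -- finiteness of B, B'
  have hδ1 : δ ≤ 1 := le_trans (tsub_le_self.trans (prob_le_one)) le_rfl
  have hδ'1 : δ' ≤ 1 := le_trans (tsub_le_self.trans (prob_le_one)) le_rfl
  have he'top : e' ≠ ∞ := ENNReal.ofReal_ne_top
  have hBtop : B ≠ ∞ := by
    rw [hB]
    exact ENNReal.add_ne_top.mpr ⟨one_ne_top,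
      ENNReal.mul_ne_top (pow_ne_top he'top) (hδ1.trans_lt one_lt_top).ne⟩
  have hB'top : B' ≠ ∞ := by
    rw [hB']
    exact ENNReal.add_ne_top.mpr ⟨one_ne_top,
      ENNReal.mul_ne_top (pow_ne_top he'top) (hδ'1.trans_lt one_lt_top).ne⟩
  -- real versions
  set δr := δ.toReal with hδr
  set δ'r := δ'.toReal with hδ'r
  have hδrnn : 0 ≤ δr := ENNReal.toReal_nonneg
  have hδ'rnn : 0 ≤ δ'r := ENNReal.toReal_nonneg
  have hεinv2 : (0:ℝ) ≤ ε⁻¹ ^ 2 := by positivity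
  have hBr : B.toReal = 1 + ε⁻¹ ^ 2 * δr := by
    rw [hB, ENNReal.toReal_add one_ne_top
      (ENNReal.mul_ne_top (pow_ne_top he'top) (hδ1.trans_lt one_lt_top).ne),
      ENNReal.toReal_mul, ENNReal.toReal_pow, ENNReal.toReal_one, he',
      ENNReal.toReal_ofReal (by positivity)]
  have hB'r : B'.toReal = 1 + ε⁻¹ ^ 2 * δ'r := by
    rw [hB', ENNReal.toReal_add one_ne_top
      (ENNReal.mul_ne_top (pow_ne_top he'top) (hδ'1.trans_lt one_lt_top).ne),
      ENNReal.toReal_mul, ENNReal.toReal_pow, ENNReal.toReal_one, he',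
      ENNReal.toReal_ofReal (by positivity)]
  have hBr1 : (1:ℝ) ≤ B.toReal := by rw [hBr]; nlinarith
  have hB'r1 : (1:ℝ) ≤ B'.toReal := by rw [hB'r]; nlinarith
  -- the log bound
  have hlog : Real.log ((P * Q).toReal) ≤ ε⁻¹ ^ 2 * δr + ε⁻¹ ^ 2 * δ'r := by
    have hmono : (P * Q).toReal ≤ B.toReal * B'.toReal := by
      rw [← ENNReal.toReal_mul]
      exact ENNReal.toReal_mono (ENNReal.mul_ne_top hBtop hB'top) hPQ
    have hstep : Real.log ((P * Q).toReal) ≤ Real.log (B.toReal * B'.toReal) := by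
      rcases eq_or_lt_of_le (ENNReal.toReal_nonneg (a := P * Q)) with h | h
      · rw [← h, Real.log_zero]
        exact Real.log_nonneg (by nlinarith)
      · exact Real.log_le_log h hmono
    refine hstep.trans ?_
    rw [Real.log_mul (by linarith) (by linarith)]
    have l1 : Real.log B.toReal ≤ ε⁻¹ ^ 2 * δr := by
      have := Real.log_le_sub_one_of_pos (x := B.toReal) (by linarith)
      rw [hBr] at this ⊢; linarith
    have l2 : Real.log B'.toReal ≤ ε⁻¹ ^ 2 * δ'r := by
      have := Real.log_le_sub_one_of_pos (x := B'.toReal) (by linarith)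
      rw [hB'r] at this ⊢; linarith
    linarith
  -- tv side
  set T := ⨆ A : {t : Set E // MeasurableSet t}, |(ν A.1).toReal - (ν' A.1).toReal| with hT
  have hbdd : BddAbove (Set.range fun A : {t : Set E // MeasurableSet t} =>
      |(ν A.1).toReal - (ν' A.1).toReal|) := by
    refine ⟨1, ?_⟩
    rintro x ⟨A, rfl⟩
    have h1 : (ν A.1).toReal ≤ 1 := by
      simpa using ENNReal.toReal_mono one_ne_top (prob_le_one (μ := ν) (s := A.1))
    have h2 : (ν' A.1).toReal ≤ 1 := by
      simpa using ENNReal.toReal_mono one_ne_top (prob_le_one (μ := ν') (s := A.1))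
    have h3 : 0 ≤ (ν A.1).toReal := ENNReal.toReal_nonneg
    have h4 : 0 ≤ (ν' A.1).toReal := ENNReal.toReal_nonneg
    rw [abs_sub_le_iff]; constructor <;> linarith
  have hδrT : δr ≤ T := by
    have hνs : ν' s ≤ ν s := h1 s hs Set.Subset.rfl
    have : δr = (ν s).toReal - (ν' s).toReal := by
      rw [hδr, hδ, ENNReal.toReal_sub_of_le hνs (measure_ne_top ν s)]
    rw [this]
    refine le_trans (le_abs_self _) ?_
    exact le_ciSup hbdd ⟨s, hs⟩
  have hδ'rT : δ'r ≤ T := by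
    have hνs : ν sᶜ ≤ ν' sᶜ := h2 sᶜ hs.compl Set.Subset.rfl
    have : δ'r = (ν' sᶜ).toReal - (ν sᶜ).toReal := by
      rw [hδ'r, hδ', ENNReal.toReal_sub_of_le hνs (measure_ne_top ν' sᶜ)]
    rw [this]
    refine le_trans ?_ (le_ciSup hbdd ⟨sᶜ, hs.compl⟩)
    rw [abs_sub_comm]
    exact le_abs_self _
  -- conclude
  rw [hilbertDist, tvDist]
  refine le_trans hlog ?_
  have hε2 : (1:ℝ) / ε ^ 2 = ε⁻¹ ^ 2 := by
    field_simp
  rw [hε2]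
  nlinarith [sq_nonneg ε⁻¹, mul_le_mul_of_nonneg_left hδrT hεinv2,
    mul_le_mul_of_nonneg_left hδ'rT hεinv2]
end

section
/- Let Q and Q' be mutually absolutely continuous probability measures on a measurable space, let u be a probability measure on a parameter space Θ, and let {Q_θ}_{θ∈Θ} be a measurable family of probability measures all absolutely continuous with respect to a common reference measure, with Q' = ∫_Θ Q_θ u(dθ) (mixture). If N ⊆ Θ is measurable with u(N) > 0, then the Radon–Nikodym derivative satisfies dQ/dQ' ≤ (sup_{θ∈N} dQ/dQ_θ) / u(N) pointwise (at points where the supremum is finite), and hence for any p ≥ 1, E_Q[ (dQ/dQ')^{1/p} ] ≤ E_Q[ ( (sup_{θ∈N} dQ/dQ_θ) / u(N) )^{1/p} ]. -/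
open MeasureTheory ENNReal

/-- if `Q' = ∫_Θ Q_θ u(dθ)` is a mixture, with all measures having densities
`ρ`, `ρ_θ`, `ρ'` with respect to a common reference measure `η`, and `u(N) > 0`, then
`dQ/dQ' ≤ (sup_{θ∈N} dQ/dQ_θ)/u(N)` pointwise, and hence
`E_Q[(dQ/dQ')^{1/p}] ≤ E_Q[((sup_{θ∈N} dQ/dQ_θ)/u(N))^{1/p}]` for any `p ≥ 1`. -/
theorem mixture_density_bound {Ω Θ : Type*} [MeasurableSpace Ω] [MeasurableSpace Θ]
    (η : Measure Ω) [SigmaFinite η]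
    (Q Q' : Measure Ω) [IsProbabilityMeasure Q] [IsProbabilityMeasure Q']
    (u : Measure Θ) [IsProbabilityMeasure u]
    (Qf : Θ → Measure Ω) (hQf : ∀ θ, IsProbabilityMeasure (Qf θ))
    (ρ : Ω → ℝ≥0∞) (ρθ : Θ → Ω → ℝ≥0∞) (ρ' : Ω → ℝ≥0∞)
    (hρm : Measurable ρ) (hρθm : ∀ θ, Measurable (ρθ θ)) (hρ'm : Measurable ρ')
    (hQ : Q = η.withDensity ρ) (hQθ : ∀ θ, Qf θ = η.withDensity (ρθ θ))
    (hQ' : Q' = η.withDensity ρ')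
    (hmix : ∀ ω, ρ' ω = ∫⁻ θ, ρθ θ ω ∂u)
    (hQQ' : Q ≪ Q') (hQ'Q : Q' ≪ Q)
    (N : Set Θ) (hN : MeasurableSet N) (huN : 0 < u N) :
    (∀ ω, ρ ω / ρ' ω ≤ (⨆ θ ∈ N, ρ ω / ρθ θ ω) / u N) ∧
      ∀ p : ℝ, 1 ≤ p →
        ∫⁻ ω, (ρ ω / ρ' ω) ^ (1 / p) ∂Q ≤
          ∫⁻ ω, ((⨆ θ ∈ N, ρ ω / ρθ θ ω) / u N) ^ (1 / p) ∂Q := by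
  have huN0 : u N ≠ 0 := huN.ne'
  have huNt : u N ≠ ∞ := measure_ne_top u N
  have key : ∀ ω, ρ ω / ρ' ω ≤ (⨆ θ ∈ N, ρ ω / ρθ θ ω) / u N := by
    intro ω
    set S := ⨆ θ ∈ N, ρ ω / ρθ θ ω with hSdef
    rcases eq_or_ne S ∞ with hStop | hStop
    · rw [hStop, ENNReal.top_div_of_ne_top huNt]
      exact le_top
    rcases eq_or_ne (ρ' ω) ∞ with h't | h't
    · rw [h't, ENNReal.div_top]
      exact zero_le
    rcases eq_or_ne (ρ ω) 0 with hρ0 | hρ0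
    · rw [hρ0, ENNReal.zero_div]
      exact zero_le
    have hSb : ∀ θ ∈ N, ρ ω / ρθ θ ω ≤ S := fun θ hθ =>
      le_iSup₂ (f := fun θ (_ : θ ∈ N) => ρ ω / ρθ θ ω) θ hθ
    have hS0 : S ≠ 0 := by
      intro h0
      have hall : ∀ θ ∈ N, ρθ θ ω = ∞ := by
        intro θ hθ
        have h1 : ρ ω / ρθ θ ω = 0 := le_antisymm (h0 ▸ hSb θ hθ) zero_le
        rcases (ENNReal.div_eq_zero_iff).mp h1 with h | h
        · exact absurd h hρ0
        · exact h
      have htop : (∞ : ℝ≥0∞) ≤ ρ' ω := by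
        rw [hmix ω]
        calc (∞ : ℝ≥0∞) = ∫⁻ θ, N.indicator (fun _ => (∞ : ℝ≥0∞)) θ ∂u := by
              rw [lintegral_indicator_const hN, ENNReal.top_mul huN0]
          _ ≤ ∫⁻ θ, ρθ θ ω ∂u := by
              refine lintegral_mono fun θ => ?_
              by_cases hθ : θ ∈ N
              · simp [hθ, hall θ hθ]
              · simp [hθ]
      exact h't (top_le_iff.mp htop)
    have hle : ∀ θ ∈ N, ρ ω ≤ S * ρθ θ ω := by
      intro θ hθ
      rcases eq_or_ne (ρθ θ ω) ∞ with ht | ht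
      · rw [ht, ENNReal.mul_top hS0]
        exact le_top
      · exact (ENNReal.div_le_iff_le_mul (Or.inr hStop) (Or.inl ht)).mp (hSb θ hθ)
    have hint : ρ ω * u N ≤ S * ρ' ω := by
      calc ρ ω * u N = ∫⁻ θ, N.indicator (fun _ => ρ ω) θ ∂u := by
            rw [lintegral_indicator_const hN]
        _ ≤ ∫⁻ θ, S * ρθ θ ω ∂u := by
            refine lintegral_mono fun θ => ?_
            by_cases hθ : θ ∈ N
            · simpa [hθ] using hle θ hθ
            · simp [hθ]
        _ = S * ∫⁻ θ, ρθ θ ω ∂u := lintegral_const_mul' _ _ hStop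
        _ = S * ρ' ω := by rw [hmix]
    have hcne : S / u N ≠ ∞ := by
      intro h
      rcases ENNReal.div_eq_top.mp h with ⟨_, h1⟩ | ⟨h1, _⟩
      · exact huN0 h1
      · exact hStop h1
    rw [ENNReal.div_le_iff_le_mul (Or.inr hcne) (Or.inl h't)]
    have h2 : ρ ω ≤ S * ρ' ω / u N :=
      (ENNReal.le_div_iff_mul_le (Or.inl huN0) (Or.inl huNt)).mpr hint
    calc ρ ω ≤ S * ρ' ω / u N := h2
      _ = S / u N * ρ' ω := by
          rw [div_eq_mul_inv, div_eq_mul_inv, mul_assoc, mul_comm (ρ' ω), ← mul_assoc]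
  refine ⟨key, fun p hp => lintegral_mono fun ω => ?_⟩
  exact ENNReal.rpow_le_rpow (key ω)
    (div_nonneg zero_le_one (le_trans zero_le_one hp))
end

section
/- Suppose sup_{n≥0} δ_n ≤ D where δ_n = h(μ_n, T_n(μ_{n−1})) (step errors in Hilbert metric), the maps T_n are Hilbert-metric contractions with τ(T_{k+1,n}) ≤ r^{n−k} for some r ∈ (0,1) with T_{k+1,n} = T_{k+1}∘⋯∘T_n, and ν_n = T_{1,n}(ν_0) satisfies the telescoping identity μ_n − ν_n = Σ_{k=1}^n [T_{k+1,n}(μ_k) − T_{k+1,n}(T_k(μ_{k−1}))]. If moreover ‖Tρ − Tρ'‖_tv ≤ (2/log 3)·τ(T)·h(ρ,ρ') for all maps T in the family and probability measures ρ,ρ', then sup_{n≥0} ‖μ_n − ν_n‖_tv ≤ (2/((1−r) log 3)) · sup_n δ_n. -/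
open MeasureTheory
open scoped NNReal

/-- The composition `T_{k+1,n} = T_{k+1} ∘ ⋯ ∘ T_n`. -/
def mapComp {E : Type*} [MeasurableSpace E] (T : ℕ → Measure E → Measure E)
    (k n : ℕ) (μ : Measure E) : Measure E :=
  (List.range (n - k)).foldl (fun m j => T (k + 1 + j) m) μ

lemma mapComp_prob {E : Type*} [MeasurableSpace E] (T : ℕ → Measure E → Measure E)
    (hT : ∀ n (μ : Measure E), IsProbabilityMeasure μ → IsProbabilityMeasure (T n μ))
    (k n : ℕ) (μ : Measure E) (hμ : IsProbabilityMeasure μ) :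
    IsProbabilityMeasure (mapComp T k n μ) := by
  unfold mapComp
  generalize List.range (n - k) = l
  induction l generalizing μ with
  | nil => exact hμ
  | cons a l ih => exact ih _ (hT _ _ hμ)

lemma abs_le_iSup_tv {E : Type*} [MeasurableSpace E] (μ ν : Measure E)
    (hμ : IsProbabilityMeasure μ) (hν : IsProbabilityMeasure ν)
    {A : Set E} (hA : MeasurableSet A) :
    |(μ A).toReal - (ν A).toReal| ≤
      ⨆ B : {s : Set E // MeasurableSet s}, |(μ B.1).toReal - (ν B.1).toReal| := by
  refine le_ciSup (f := fun B : {s : Set E // MeasurableSet s} =>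
    |(μ B.1).toReal - (ν B.1).toReal|) ?_ ⟨A, hA⟩
  refine ⟨1, ?_⟩
  rintro x ⟨B, rfl⟩
  have h1 : (μ B.1).toReal ≤ 1 := by
    simpa using ENNReal.toReal_mono ENNReal.one_ne_top (prob_le_one (μ := μ) (s := B.1))
  have h2 : (ν B.1).toReal ≤ 1 := by
    simpa using ENNReal.toReal_mono ENNReal.one_ne_top (prob_le_one (μ := ν) (s := B.1))
  have h3 : 0 ≤ (μ B.1).toReal := ENNReal.toReal_nonneg
  have h4 : 0 ≤ (ν B.1).toReal := ENNReal.toReal_nonneg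
  rw [abs_sub_le_iff]
  constructor <;> linarith

lemma hilbertDist_nonneg' {E : Type*} [MeasurableSpace E] (μ ν : Measure E)
    (hμ : IsProbabilityMeasure μ) (hν : IsProbabilityMeasure ν) :
    0 ≤ hilbertDist μ ν := by
  unfold hilbertDist
  set S1 := ⨆ A : {s : Set E // MeasurableSet s}, μ A.1 / ν A.1 with hS1
  set S2 := ⨆ A : {s : Set E // MeasurableSet s}, ν A.1 / μ A.1 with hS2
  have h1 : (1 : ENNReal) ≤ S1 := by
    have := le_iSup (fun A : {s : Set E // MeasurableSet s} => μ A.1 / ν A.1)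
      ⟨Set.univ, MeasurableSet.univ⟩
    simpa [measure_univ] using this
  have h2 : (1 : ENNReal) ≤ S2 := by
    have := le_iSup (fun A : {s : Set E // MeasurableSet s} => ν A.1 / μ A.1)
      ⟨Set.univ, MeasurableSet.univ⟩
    simpa [measure_univ] using this
  have hle : (1 : ENNReal) ≤ S1 * S2 := by
    calc (1 : ENNReal) = 1 * 1 := (one_mul 1).symm
    _ ≤ S1 * S2 := mul_le_mul' h1 h2
  by_cases hP : S1 * S2 = ⊤
  · simp [hP]
  · apply Real.log_nonneg
    rw [show (1:ℝ) = (1:ENNReal).toReal by simp]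
    exact ENNReal.toReal_mono hP hle

/-- abstract form of Oudjane Cor. 4.5: if the step errors
`δ_n = h(μ_n, T_n(μ_{n−1}))` are bounded by `D`, the compositions satisfy
`τ(T_{k+1,n}) ≤ r^{n−k}`, `ν_n = T_{1,n}(ν_0)`, the telescoping identity holds, and
`‖Tρ − Tρ'‖_tv ≤ (2/log 3)·τ(T)·h(ρ,ρ')` for the maps of the family, then
`sup_n ‖μ_n − ν_n‖_tv ≤ (2/((1−r) log 3))·D`. -/
theorem telescoping_total_error_bound {E : Type*} [MeasurableSpace E]
    (T : ℕ → Measure E → Measure E)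
    (hT : ∀ n (μ : Measure E), IsProbabilityMeasure μ → IsProbabilityMeasure (T n μ))
    (μs νs : ℕ → Measure E)
    (hμs : ∀ n, IsProbabilityMeasure (μs n)) (hνs : ∀ n, IsProbabilityMeasure (νs n))
    (r D : ℝ) (hr0 : 0 < r) (hr1 : r < 1) (hD : 0 ≤ D)
    (hδ : ∀ n : ℕ, 1 ≤ n → hilbertDist (μs n) (T n (μs (n - 1))) ≤ D)
    (hcontr : ∀ k n : ℕ, birkhoffCoeff (mapComp T k n) ≤ r ^ (n - k))
    (hν : ∀ n, νs n = mapComp T 0 n (νs 0))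
    (htel : ∀ n : ℕ, ∀ A : Set E, MeasurableSet A →
      (μs n A).toReal - (νs n A).toReal =
        ∑ k ∈ Finset.Icc 1 n,
          ((mapComp T k n (μs k) A).toReal -
            (mapComp T k n (T k (μs (k - 1))) A).toReal))
    (hcmp : ∀ k n : ℕ, ∀ ρ ρ' : Measure E,
      IsProbabilityMeasure ρ → IsProbabilityMeasure ρ' →
      tvDist (mapComp T k n ρ) (mapComp T k n ρ') ≤
        (2 / Real.log 3) * birkhoffCoeff (mapComp T k n) * hilbertDist ρ ρ') :
    ∀ n : ℕ, tvDist (μs n) (νs n) ≤ (2 / ((1 - r) * Real.log 3)) * D := by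
  intro n
  have hlog3 : 0 < Real.log 3 := Real.log_pos (by norm_num)
  have hr1' : 0 < 1 - r := by linarith
  unfold tvDist
  rw [show (2:ℝ) / ((1 - r) * Real.log 3) * D = 2 * (D / ((1 - r) * Real.log 3)) by ring]
  haveI : Nonempty {s : Set E // MeasurableSet s} := ⟨⟨∅, MeasurableSet.empty⟩⟩
  refine mul_le_mul_of_nonneg_left ?_ (by norm_num)
  refine ciSup_le fun A => ?_
  rw [htel n A.1 A.2]
  calc |∑ k ∈ Finset.Icc 1 n,
        ((mapComp T k n (μs k) A.1).toReal -
          (mapComp T k n (T k (μs (k - 1))) A.1).toReal)|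
      ≤ ∑ k ∈ Finset.Icc 1 n,
        |(mapComp T k n (μs k) A.1).toReal -
          (mapComp T k n (T k (μs (k - 1))) A.1).toReal| :=
        Finset.abs_sum_le_sum_abs _ _
    _ ≤ ∑ k ∈ Finset.Icc 1 n, (1 / Real.log 3) * (r ^ (n - k) * D) := by
        refine Finset.sum_le_sum fun k hk => ?_
        have hk1 : 1 ≤ k := (Finset.mem_Icc.mp hk).1
        set ρ := μs k
        set ρ' := T k (μs (k - 1))
        have hρ : IsProbabilityMeasure ρ := hμs k
        have hρ' : IsProbabilityMeasure ρ' := hT _ _ (hμs (k - 1))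
        have hP1 := mapComp_prob T hT k n ρ hρ
        have hP2 := mapComp_prob T hT k n ρ' hρ'
        have h1 := abs_le_iSup_tv _ _ hP1 hP2 A.2
        have hh0 : 0 ≤ hilbertDist ρ ρ' := hilbertDist_nonneg' _ _ hρ hρ'
        have hhD : hilbertDist ρ ρ' ≤ D := hδ k hk1
        have h2 : tvDist (mapComp T k n ρ) (mapComp T k n ρ') ≤
            (2 / Real.log 3) * (r ^ (n - k) * D) := by
          refine (hcmp k n ρ ρ' hρ hρ').trans ?_
          have ht1 : birkhoffCoeff (mapComp T k n) * hilbertDist ρ ρ' ≤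
              r ^ (n - k) * hilbertDist ρ ρ' :=
            mul_le_mul_of_nonneg_right (hcontr k n) hh0
          have ht2 : r ^ (n - k) * hilbertDist ρ ρ' ≤ r ^ (n - k) * D :=
            mul_le_mul_of_nonneg_left hhD (pow_nonneg hr0.le _)
          have hc : 0 ≤ (2 : ℝ) / Real.log 3 := by positivity
          calc (2 / Real.log 3) * birkhoffCoeff (mapComp T k n) * hilbertDist ρ ρ'
              = (2 / Real.log 3) * (birkhoffCoeff (mapComp T k n) * hilbertDist ρ ρ') := by
                ring
            _ ≤ (2 / Real.log 3) * (r ^ (n - k) * D) :=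
                mul_le_mul_of_nonneg_left (ht1.trans ht2) hc
        unfold tvDist at h2
        have heq : (2 / Real.log 3) * (r ^ (n - k) * D) =
            2 * ((1 / Real.log 3) * (r ^ (n - k) * D)) := by ring
        rw [heq] at h2
        linarith
    _ = (1 / Real.log 3) * D * ∑ k ∈ Finset.Icc 1 n, r ^ (n - k) := by
        rw [Finset.mul_sum]; exact Finset.sum_congr rfl fun k _ => by ring
    _ ≤ (1 / Real.log 3) * D * (1 - r)⁻¹ := by
        refine mul_le_mul_of_nonneg_left ?_ (by positivity)
        have hre : ∑ k ∈ Finset.Icc 1 n, r ^ (n - k) = ∑ j ∈ Finset.range n, r ^ j := by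
          refine Finset.sum_nbij' (i := fun k => n - k) (j := fun j => n - j) ?_ ?_ ?_ ?_ ?_
          · intro a ha; simp only [Finset.mem_Icc] at ha; simp only [Finset.mem_range]; omega
          · intro a ha; simp only [Finset.mem_range] at ha; simp only [Finset.mem_Icc]; omega
          · intro a ha; simp only [Finset.mem_Icc] at ha; show n - (n - a) = a; omega
          · intro a ha; simp only [Finset.mem_range] at ha; show n - (n - a) = a; omega
          · intro a _; rfl
        rw [hre]
        exact (Summable.sum_le_tsum (Finset.range n) (fun i _ => pow_nonneg hr0.le i)
          (summable_geometric_of_lt_one hr0.le hr1)).trans_eq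
          (tsum_geometric_of_lt_one hr0.le hr1)
    _ = D / ((1 - r) * Real.log 3) := by
        rw [eq_div_iff (by positivity)]
        field_simp
end
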